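/- arXiv:1403.4101 — 2 statements merged into one kernel-verified Lean document; each statement's English description precedes it below -/
import Mathlib

section
/- Suppose that on the whole interval (t₁, t₂) one has 0 ≤ a(t) − |b(t)| ≤ η (i.e., (t₁,t₂) = S_+(t₁,t₂)). Then a solution x of the delay inequality satisfies |x(t₂)| ≤ M₀(t₁) − [M₀(t₁) − |x(t₁)|] e^{−M_a (t₂ − t₁)}, where M₀(t) = sup_{t−τ_max ≤ s ≤ t} |x(s)|. -/
/-- Upper right Dini derivative `D⁺f(t) = limsup_{h → 0⁺} (f(t+h) - f(t))/h`. -/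
noncomputable def DiniUpper (f : ℝ → ℝ) (t : ℝ) : EReal :=
  Filter.limsup (fun h : ℝ => (((f (t + h) - f t) / h : ℝ) : EReal))
    (nhdsWithin 0 (Set.Ioi 0))

/-- The maximal function `M₀(t) = sup_{t-τ_max ≤ s ≤ t} |x(s)|`. -/
noncomputable def M0 (x : ℝ → ℝ) (τmax t : ℝ) : ℝ :=
  sSup ((fun s => |x s|) '' Set.Icc (t - τmax) t)

open Filter Set Topology

/-!
Compare `y = |x|` on `[t₁, t₂]` with the barrier `w(t) = L - (L - y₀) e^{-M_a (t - t₁)}`, which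
solves `w' = M_a (L - w)`, where `L > M₀(t₁)` and `y₀ > |x(t₁)|`. As long as `y ≤ w` up to a time
`T`, the delayed term `sup_{[T-τ_max, T]} y` is at most `max (M₀(t₁), w(T))`; since `b ≤ |b| ≤ a`
on `S_+`, at a first touching point `y(T) = w(T)` this forces `D⁺y(T) < w'(T)`, so `y` cannot cross
`w`. Letting `L ↓ M₀(t₁)` and `y₀ ↓ |x(t₁)|` gives the estimate.
-/

theorem eventually_slope_lt_of_diniUpper_lt {f : ℝ → ℝ} {t r : ℝ} (hf : DiniUpper f t < r) :
    ∀ᶠ s in 𝓝[>] t, slope f t s < r := by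
  have hmap : map (t + ·) (𝓝[>] (0 : ℝ)) = 𝓝[>] t := by
    rw [map_add_left_nhdsGT, add_zero]
  rw [← hmap, eventually_map]
  filter_upwards [eventually_lt_of_limsup_lt hf] with h hh
  rw [slope_def_field, add_sub_cancel_left]
  exact_mod_cast hh

theorem eventually_lt_of_diniUpper_lt_of_hasDerivWithinAt {f g : ℝ → ℝ} {t g' : ℝ}
    (hfg : f t ≤ g t) (hg : HasDerivWithinAt g g' (Ioi t) t) (hlt : DiniUpper f t < g') :
    ∀ᶠ s in 𝓝[>] t, f s < g s := by
  obtain ⟨r, hfr, hrg⟩ := EReal.lt_iff_exists_real_btwn.mp hlt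
  have hslope_g : ∀ᶠ s in 𝓝[>] t, r < slope g t s :=
    ((hasDerivWithinAt_iff_tendsto_slope' (lt_irrefl t)).mp hg).eventually
      (eventually_gt_nhds (mod_cast hrg))
  filter_upwards [eventually_slope_lt_of_diniUpper_lt hfr, hslope_g, self_mem_nhdsWithin]
    with s hf hg (hts : t < s)
  rw [slope_def_field, div_lt_iff₀ (sub_pos.mpr hts)] at hf
  rw [slope_def_field, lt_div_iff₀ (sub_pos.mpr hts)] at hg
  linarith

theorem sSup_image_Icc_sub_le_max {y : ℝ → ℝ} {τ t₁ T M N : ℝ} (hτ : 0 ≤ τ) (hT : t₁ ≤ T)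
    (hM : ∀ s ∈ Icc (t₁ - τ) t₁, y s ≤ M) (hN : ∀ s ∈ Icc t₁ T, y s ≤ N) :
    sSup (y '' Icc (T - τ) T) ≤ max M N := by
  refine csSup_le ((nonempty_Icc.mpr (by linarith)).image y) ?_
  rintro _ ⟨s, hs, rfl⟩
  rcases le_total s t₁ with hst | hst
  · exact le_max_of_le_left (hM s ⟨by linarith [hs.1], hst⟩)
  · exact le_max_of_le_right (hN s ⟨hst, hs.2⟩)

theorem neg_mul_add_mul_lt_mul_sub {a b K M N L k : ℝ} (ha : 0 < a) (hak : a ≤ k)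
    (hba : b ≤ a) (hK₀ : 0 ≤ K) (hK : K ≤ max M N) (hML : M < L) (hNL : N < L) :
    -a * N + b * K < k * (L - N) := by
  have hbK : b * K ≤ a * K := mul_le_mul_of_nonneg_right hba hK₀
  rcases le_total M N with hMN | hNM
  · have : a * K ≤ a * N := mul_le_mul_of_nonneg_left (hK.trans (max_le hMN le_rfl)) ha.le
    nlinarith
  · have : a * K ≤ a * M := mul_le_mul_of_nonneg_left (hK.trans (max_le le_rfl hNM)) ha.le
    nlinarith

theorem hasDerivAt_sub_mul_exp (L C k t₀ t : ℝ) :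
    HasDerivAt (fun t => L - C * Real.exp (-k * (t - t₀)))
      (k * (L - (L - C * Real.exp (-k * (t - t₀))))) t := by
  have hlin : HasDerivAt (fun t => -k * (t - t₀)) (-k) t := by
    simpa using ((hasDerivAt_id t).sub_const t₀).const_mul (-k)
  exact ((hlin.exp.const_mul C).const_sub L).congr_deriv (by ring)

theorem le_sub_mul_exp_of_diniUpper_le {y a b : ℝ → ℝ} {k τ t₁ t₂ M L y₀ : ℝ}
    (hy : Continuous y) (hy_nonneg : ∀ s, 0 ≤ y s) (hτ : 0 ≤ τ)
    (ha : ∀ t ∈ Ioo t₁ t₂, 0 < a t ∧ a t ≤ k) (hba : ∀ t ∈ Ioo t₁ t₂, b t ≤ a t)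
    (hdini : ∀ t ∈ Ioo t₁ t₂,
      DiniUpper y t ≤ ((-a t * y t + b t * sSup (y '' Icc (t - τ) t) : ℝ) : EReal))
    (hM : ∀ s ∈ Icc (t₁ - τ) t₁, y s ≤ M) (hML : M < L) (hy₁ : y t₁ < y₀)
    (hy₀L : y₀ < L) :
    ∀ t ∈ Icc t₁ t₂, y t ≤ L - (L - y₀) * Real.exp (-k * (t - t₁)) := by
  set w : ℝ → ℝ := fun t => L - (L - y₀) * Real.exp (-k * (t - t₁))
  have hw : Continuous w := by fun_prop
  have hwL : ∀ t, w t < L := fun t => by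
    have := mul_pos (sub_pos.mpr hy₀L) (Real.exp_pos (-k * (t - t₁)))
    linarith
  have hwt₁ : w t₁ = y₀ := by simp [w]
  refine fun t ht =>
    ((isClosed_le hy hw).inter isClosed_Icc).Icc_subset_of_forall_mem_nhdsGT_of_Icc_subset
      (show y t₁ ≤ w t₁ from hwt₁ ▸ hy₁.le) (fun T hT hhist => ?_) ht
  replace hhist : ∀ s ∈ Icc t₁ T, y s ≤ w s := hhist
  rcases (hhist T ⟨hT.1, le_rfl⟩).lt_or_eq with hlt | heq
  · exact mem_nhdsWithin_of_mem_nhds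
      ((hy.continuousAt.eventually_lt hw.continuousAt hlt).mono fun _ h => h.le)
  have hT₁ : t₁ < T := hT.1.lt_of_ne (by rintro rfl; rw [hwt₁] at heq; linarith)
  have hTI : T ∈ Ioo t₁ t₂ := ⟨hT₁, hT.2⟩
  obtain ⟨haT, hak⟩ := ha T hTI
  have hmono : MonotoneOn w (Icc t₁ T) := fun s _ u _ hsu => by
    have : Real.exp (-k * (u - t₁)) ≤ Real.exp (-k * (s - t₁)) :=
      Real.exp_le_exp.mpr (by nlinarith)
    simp only [w]
    nlinarith [sub_pos.mpr hy₀L]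
  have hwindow := sSup_image_Icc_sub_le_max hτ hT.1 hM
    (fun s hs => (hhist s hs).trans (hmono hs ⟨hT.1, le_rfl⟩ hs.2))
  have hrhs := neg_mul_add_mul_lt_mul_sub haT hak (hba T hTI)
    (Real.sSup_nonneg (by rintro _ ⟨s, -, rfl⟩; exact hy_nonneg s)) hwindow hML (hwL T)
  have hdini_lt : DiniUpper y T < ((k * (L - w T) : ℝ) : EReal) :=
    (hdini T hTI).trans_lt (by rw [heq]; exact_mod_cast hrhs)
  filter_upwards [eventually_lt_of_diniUpper_lt_of_hasDerivWithinAt heq.le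
    (hasDerivAt_sub_mul_exp L (L - y₀) k t₁ T).hasDerivWithinAt hdini_lt] with s hs
  exact hs.le

theorem estimate_on_Splus_general (Ma τmax η t₁ t₂ : ℝ) (a b : ℝ → ℝ)
    (hτmax : 0 < τmax)
    (ha : ∀ t ≥ (0 : ℝ), 0 < a t ∧ a t ≤ Ma)
    (x : ℝ → ℝ) (hxcont : Continuous x)
    (hineq : ∀ t ≥ (0 : ℝ), DiniUpper (fun s => |x s|) t ≤
      ((-(a t) * |x t| + b t * sSup ((fun s => |x s|) '' Set.Icc (t - τmax) t) : ℝ) : EReal))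
    (ht₁ : 0 ≤ t₁) (ht₁₂ : t₁ < t₂)
    (hSplus : ∀ t ∈ Set.Ioo t₁ t₂, 0 ≤ a t - |b t| ∧ a t - |b t| ≤ η) :
    |x t₂| ≤ M0 x τmax t₁ - (M0 x τmax t₁ - |x t₁|) * Real.exp (-Ma * (t₂ - t₁)) := by
  have hM : ∀ s ∈ Icc (t₁ - τmax) t₁, |x s| ≤ M0 x τmax t₁ := fun s hs =>
    le_csSup (isCompact_Icc.image hxcont.abs).bddAbove (mem_image_of_mem _ hs)
  have hx₁ : |x t₁| ≤ M0 x τmax t₁ := hM t₁ ⟨by linarith, le_rfl⟩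
  refine le_of_forall_pos_le_add fun ε hε => ?_
  have hcomp := le_sub_mul_exp_of_diniUpper_le (y := fun s => |x s|)
    (L := M0 x τmax t₁ + ε) (y₀ := |x t₁| + ε / 2) hxcont.abs (fun s => abs_nonneg _) hτmax.le
    (fun t ht => ha t (ht₁.trans ht.1.le))
    (fun t ht => (le_abs_self _).trans (sub_nonneg.mp (hSplus t ht).1))
    (fun t ht => hineq t (ht₁.trans ht.1.le)) hM (by linarith) (by linarith) (by linarith)
    t₂ ⟨ht₁₂.le, le_rfl⟩
  nlinarith [Real.exp_pos (-Ma * (t₂ - t₁))]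

/-- **Lemma 3, case 1.** Suppose `0 ≤ a(t) - |b(t)| ≤ η` on the whole interval `(t₁,t₂)`
(i.e. `(t₁,t₂) = S_+(t₁,t₂)`). Then a solution of
`D⁺|x(t)| ≤ -a(t)|x(t)| + b(t) sup_{t-τ_max ≤ s ≤ t} |x(s)|` satisfies
`|x(t₂)| ≤ M₀(t₁) - [M₀(t₁) - |x(t₁)|] e^{-M_a (t₂ - t₁)}`. -/
theorem estimate_on_Splus (Ma Mb τmax η t₁ t₂ : ℝ) (a b : ℝ → ℝ)
    (hτmax : 0 < τmax) (hη : 0 < η)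
    (ha : ∀ t ≥ (0 : ℝ), 0 < a t ∧ a t ≤ Ma)
    (hb : ∀ t ≥ (0 : ℝ), |b t| ≤ Mb)
    (x φ : ℝ → ℝ) (hxcont : Continuous x)
    (hinit : ∀ s ∈ Set.Icc (-τmax) (0 : ℝ), x s = φ s)
    (hineq : ∀ t ≥ (0 : ℝ), DiniUpper (fun s => |x s|) t ≤
      ((-(a t) * |x t| + b t * sSup ((fun s => |x s|) '' Set.Icc (t - τmax) t) : ℝ) : EReal))
    (ht₁ : 0 ≤ t₁) (ht₁₂ : t₁ < t₂)
    (hSplus : ∀ t ∈ Set.Ioo t₁ t₂, 0 ≤ a t - |b t| ∧ a t - |b t| ≤ η) :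
    |x t₂| ≤ M0 x τmax t₁ - (M0 x τmax t₁ - |x t₁|) * Real.exp (-Ma * (t₂ - t₁)) :=
  estimate_on_Splus_general Ma τmax η t₁ t₂ a b hτmax ha x hxcont hineq ht₁ ht₁₂ hSplus
end

section
/- Suppose that on the whole interval (t₁, t₂) one has a(t) − |b(t)| > η (i.e., (t₁,t₂) = S_η(t₁,t₂)). Then for any M̃ ≥ M₀(t₁), a solution x of the delay inequality satisfies |x(t₂)| ≤ max{δ M̃, |x(t₁)| − (η/2) μ(S_η(t₁,t₂)) M̃}, where δ = 1 − η/(2 M_a), μ is Lebesgue measure, and M₀(t) = sup_{t−τ_max ≤ s ≤ t} |x(s)|. -/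
/-!
Since `a - |b| > η > 0` on `(t₁, t₂)`, the decay term dominates the delay term, so `|x|` can never
climb above its past maximum `M₀(t₁) ≤ M̃`; hence the delay term is at most `|b| M̃`. Wherever
`|x| ≥ δ M̃` this gives `D⁺|x| ≤ -a δ M̃ + |b| M̃ ≤ -(η/2) M̃`, using `a ≤ M_a`. So either `|x|`
reaches `δ M̃` at some time, after which it can never rise above that level again, or it stays
above `δ M̃` and decreases at rate at least `(η/2) M̃` on the whole interval, whose length is
`μ(S_η(t₁, t₂))`. Each of these steps compares `|x|` with an affine barrier, using only an upper
bound on the Dini derivative at the points where `|x|` touches the barrier.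
-/

open Set Filter Topology

theorem eventually_lt_of_diniUpper_lt {f : ℝ → ℝ} {t k : ℝ} (h : DiniUpper f t < k) :
    ∀ᶠ z in 𝓝[>] t, f z < f t + k * (z - t) := by
  have hslope : ∀ᶠ h in 𝓝[>] (0 : ℝ), (((f (t + h) - f t) / h : ℝ) : EReal) < k :=
    eventually_lt_of_limsup_lt h
  rw [← sub_self t, ← Filter.map_subRight_nhdsGT, eventually_map] at hslope
  filter_upwards [hslope, self_mem_nhdsWithin] with z hz hzt
  rw [add_sub_cancel, EReal.coe_lt_coe_iff, div_lt_iff₀ (sub_pos.2 hzt)] at hz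
  linarith

theorem le_affine_of_diniUpper_lt {f : ℝ → ℝ} {a b β k : ℝ} (hf : ContinuousOn f (Icc a b))
    (ha : f a ≤ β)
    (hD : ∀ t ∈ Ico a b, (∀ s ∈ Icc a t, f s ≤ β + k * (s - a)) →
      f t = β + k * (t - a) → DiniUpper f t < k) :
    ∀ t ∈ Icc a b, f t ≤ β + k * (t - a) := by
  have hB : Continuous fun t => β + k * (t - a) := by fun_prop
  have hclosed : IsClosed ({t | f t ≤ β + k * (t - a)} ∩ Icc a b) := by
    rw [inter_comm]
    exact (hf.prodMk hB.continuousOn).preimage_isClosed_of_isClosed isClosed_Icc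
      OrderClosedTopology.isClosed_le'
  refine hclosed.Icc_subset_of_forall_mem_nhdsGT_of_Icc_subset (by simpa) fun t ht hbelow => ?_
  rcases (show f t ≤ β + k * (t - a) from hbelow ⟨ht.1, le_rfl⟩).lt_or_eq with hlt | htouch
  · have hcont : ContinuousWithinAt (fun z => β + k * (z - a) - f z) (Ioi t) t :=
      (hB.continuousWithinAt.sub (hf t (Ico_subset_Icc_self ht))).mono_of_mem_nhdsWithin
        (Icc_mem_nhdsGT_of_mem ht)
    filter_upwards [hcont.eventually (eventually_gt_nhds (sub_pos.2 hlt))] with z hz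
    exact (sub_pos.1 hz).le
  · filter_upwards [eventually_lt_of_diniUpper_lt (hD t ht hbelow htouch)] with z hz
    show f z ≤ β + k * (z - a)
    linarith

theorem le_affine_of_diniUpper_le {f : ℝ → ℝ} {a b β k : ℝ} (hf : ContinuousOn f (Icc a b))
    (ha : f a ≤ β) (hD : ∀ t ∈ Ioo a b, β + k * (t - a) ≤ f t → DiniUpper f t ≤ k) :
    ∀ t ∈ Icc a b, f t ≤ β + k * (t - a) := by
  intro t ht
  -- the barrier lifted by `ε` and tilted by `ε` can only be touched where `f` lies above the
  -- original one, and there `D⁺f ≤ k < k + ε`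
  have hε : ∀ ε > 0, f t ≤ β + ε + (k + ε) * (t - a) := by
    intro ε hε
    refine le_affine_of_diniUpper_lt hf (by linarith) (fun s hs _ htouch => ?_) t ht
    rcases hs.1.eq_or_lt with rfl | has
    · rw [sub_self, mul_zero, add_zero] at htouch
      linarith
    · refine (hD s ⟨has, hs.2⟩ ?_).trans_lt (by exact_mod_cast lt_add_of_pos_right k hε)
      nlinarith
  have hlim : Tendsto (fun ε => β + ε + (k + ε) * (t - a)) (𝓝[>] 0)
      (𝓝 (β + 0 + (k + 0) * (t - a))) :=
    (Continuous.tendsto (by fun_prop) 0).mono_left nhdsWithin_le_nhds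
  simpa using ge_of_tendsto hlim (eventually_nhdsWithin_of_forall hε)

theorem abs_le_M0 {x : ℝ → ℝ} {τmax t s : ℝ} (hx : Continuous x) (hs : s ∈ Icc (t - τmax) t) :
    |x s| ≤ M0 x τmax t :=
  le_csSup (isCompact_Icc.image hx.abs).bddAbove (mem_image_of_mem _ hs)

theorem abs_le_M0_self {x : ℝ → ℝ} {τmax : ℝ} (hx : Continuous x) (hτ : 0 ≤ τmax) (t : ℝ) :
    |x t| ≤ M0 x τmax t :=
  abs_le_M0 hx ⟨by linarith, le_rfl⟩

theorem M0_le {x : ℝ → ℝ} {τmax t K : ℝ} (hτ : 0 ≤ τmax)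
    (h : ∀ s ∈ Icc (t - τmax) t, |x s| ≤ K) : M0 x τmax t ≤ K :=
  csSup_le ((nonempty_Icc.2 (by linarith)).image _) (forall_mem_image.2 h)

theorem diniUpper_le_of_history_le {x a b : ℝ → ℝ} {τmax t K : ℝ} (hτ : 0 ≤ τmax)
    (hx : Continuous x)
    (hineq : DiniUpper (fun s => |x s|) t ≤ ((-(a t) * |x t| + b t * M0 x τmax t : ℝ) : EReal))
    (hK : ∀ s ∈ Icc (t - τmax) t, |x s| ≤ K) :
    DiniUpper (fun s => |x s|) t ≤ ((-(a t) * |x t| + |b t| * K : ℝ) : EReal) := by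
  refine hineq.trans (EReal.coe_le_coe_iff.2 ?_)
  have hM0 : 0 ≤ M0 x τmax t := (abs_nonneg _).trans (abs_le_M0_self hx hτ t)
  have hdelay : b t * M0 x τmax t ≤ |b t| * K :=
    (mul_le_mul_of_nonneg_right (le_abs_self _) hM0).trans
      (mul_le_mul_of_nonneg_left (M0_le hτ hK) (abs_nonneg _))
  linarith

theorem abs_le_M0_of_abs_lt {x a b : ℝ → ℝ} {τmax t₁ t₂ : ℝ} (hτ : 0 ≤ τmax)
    (hx : Continuous x)
    (hineq : ∀ t ∈ Ioo t₁ t₂,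
      DiniUpper (fun s => |x s|) t ≤ ((-(a t) * |x t| + b t * M0 x τmax t : ℝ) : EReal))
    (hab : ∀ t ∈ Ioo t₁ t₂, |b t| < a t) :
    ∀ t ∈ Icc (t₁ - τmax) t₂, |x t| ≤ M0 x τmax t₁ := by
  have hpast : ∀ s ∈ Icc (t₁ - τmax) t₁, |x s| ≤ M0 x τmax t₁ := fun s hs => abs_le_M0 hx hs
  have hfuture : ∀ t ∈ Icc t₁ t₂, |x t| ≤ M0 x τmax t₁ := by
    intro t ht
    refine le_of_forall_gt_imp_ge_of_dense fun K hK => ?_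
    have hstart : |x t₁| < K := (abs_le_M0_self hx hτ t₁).trans_lt hK
    have hK0 : 0 < K := (abs_nonneg _).trans_lt hstart
    suffices hD : ∀ c ∈ Ico t₁ t₂, (∀ s ∈ Icc t₁ c, |x s| ≤ K + 0 * (s - t₁)) →
        |x c| = K + 0 * (c - t₁) → DiniUpper (fun s => |x s|) c < 0 by
      simpa using le_affine_of_diniUpper_lt hx.abs.continuousOn hstart.le hD t ht
    intro c hc hbelow htouch
    simp only [zero_mul, add_zero] at hbelow htouch
    have hc' : c ∈ Ioo t₁ t₂ := ⟨hc.1.lt_of_ne (by rintro rfl; linarith), hc.2⟩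
    have hhist : ∀ s ∈ Icc (c - τmax) c, |x s| ≤ K := by
      intro s hs
      rcases le_total s t₁ with hs₁ | hs₁
      · exact (hpast s ⟨by linarith [hs.1, hc.1], hs₁⟩).trans hK.le
      · exact hbelow s ⟨hs₁, hs.2⟩
    refine (diniUpper_le_of_history_le hτ hx (hineq c hc') hhist).trans_lt ?_
    rw [htouch, ← EReal.coe_zero, EReal.coe_lt_coe_iff]
    linarith [mul_lt_mul_of_pos_right (hab c hc') hK0]
  intro t ht
  rcases le_total t t₁ with ht₁ | ht₁
  · exact hpast t ⟨ht.1, ht₁⟩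
  · exact hfuture t ⟨ht₁, ht.2⟩

theorem neg_mul_add_mul_le_of_gap {a B Ma η M y : ℝ} (ha : 0 < a) (haM : a ≤ Ma) (hη : 0 ≤ η)
    (hgap : η + B ≤ a) (hM : 0 ≤ M) (hy : (1 - η / (2 * Ma)) * M ≤ y) :
    -a * y + B * M ≤ -(η / 2 * M) := by
  have hMa : 0 < Ma := ha.trans_le haM
  have hfrac : a * (η / (2 * Ma)) ≤ η / 2 := by
    rw [mul_div_assoc', div_le_iff₀ (by positivity)]
    nlinarith
  nlinarith [mul_le_mul_of_nonneg_left hy ha.le, mul_le_mul_of_nonneg_right hfrac hM]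

theorem estimate_on_Seta_general (Ma τmax η t₁ t₂ : ℝ) (a b : ℝ → ℝ)
    (hτmax : 0 < τmax) (hη : 0 < η)
    (ha : ∀ t ≥ (0 : ℝ), 0 < a t ∧ a t ≤ Ma)
    (x : ℝ → ℝ) (hxcont : Continuous x)
    (hineq : ∀ t ≥ (0 : ℝ), DiniUpper (fun s => |x s|) t ≤
      ((-(a t) * |x t| + b t * sSup ((fun s => |x s|) '' Set.Icc (t - τmax) t) : ℝ) : EReal))
    (ht₁ : 0 ≤ t₁) (ht₁₂ : t₁ < t₂)
    (hSeta : ∀ t ∈ Set.Ioo t₁ t₂, a t - |b t| > η) :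
    ∀ Mtilde : ℝ, M0 x τmax t₁ ≤ Mtilde →
      |x t₂| ≤ max ((1 - η / (2 * Ma)) * Mtilde)
        (|x t₁| - η / 2 *
          (MeasureTheory.volume {t ∈ Set.Ioo t₁ t₂ | a t - |b t| > η}).toReal * Mtilde) := by
  intro Mt hMt
  have hdini : ∀ t ∈ Ioo t₁ t₂, DiniUpper (fun s => |x s|) t ≤
      ((-(a t) * |x t| + b t * M0 x τmax t : ℝ) : EReal) :=
    fun t ht => hineq t (ht₁.trans ht.1.le)
  have hbounded : ∀ t ∈ Icc (t₁ - τmax) t₂, |x t| ≤ M0 x τmax t₁ :=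
    abs_le_M0_of_abs_lt hτmax.le hxcont hdini fun t ht => by linarith [hSeta t ht]
  have hMt0 : 0 ≤ Mt := (abs_nonneg _).trans ((abs_le_M0_self hxcont hτmax.le t₁).trans hMt)
  have hdecay : ∀ c ∈ Ioo t₁ t₂, (1 - η / (2 * Ma)) * Mt ≤ |x c| →
      DiniUpper (fun s => |x s|) c ≤ ((-(η / 2 * Mt) : ℝ) : EReal) := by
    intro c hc hδ
    have hc0 : 0 ≤ c := ht₁.trans hc.1.le
    refine (diniUpper_le_of_history_le hτmax.le hxcont (hdini c hc) fun s hs =>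
      (hbounded s ⟨by linarith [hs.1, hc.1], hs.2.trans hc.2.le⟩).trans hMt).trans ?_
    exact EReal.coe_le_coe_iff.2 (neg_mul_add_mul_le_of_gap (ha c hc0).1 (ha c hc0).2 hη.le
      (by linarith [hSeta c hc]) hMt0 hδ)
  by_cases hdrop : ∃ t' ∈ Icc t₁ t₂, |x t'| ≤ (1 - η / (2 * Ma)) * Mt
  · obtain ⟨t', ht', hdrop⟩ := hdrop
    refine le_max_of_le_left ?_
    simpa using le_affine_of_diniUpper_le (k := 0) hxcont.abs.continuousOn hdrop
      (fun c hc hδ => (hdecay c ⟨ht'.1.trans_lt hc.1, hc.2⟩ (by simpa using hδ)).trans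
        (EReal.coe_le_coe_iff.2 (neg_nonpos.2 (by positivity)))) t₂ ⟨ht'.2, le_rfl⟩
  · push Not at hdrop
    refine le_max_of_le_right ?_
    rw [sep_eq_self_iff_mem_true.2 hSeta, Real.volume_Ioo,
      ENNReal.toReal_ofReal (sub_nonneg.2 ht₁₂.le)]
    have := le_affine_of_diniUpper_le hxcont.abs.continuousOn le_rfl
      (fun c hc _ => hdecay c hc (hdrop c (Ioo_subset_Icc_self hc)).le) t₂ ⟨ht₁₂.le, le_rfl⟩
    linarith

/-- **Lemma 3, case 2.** Suppose `a(t) - |b(t)| > η` on the whole interval `(t₁,t₂)`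
(i.e. `(t₁,t₂) = S_η(t₁,t₂)`). Then, with `δ = 1 - η/(2M_a)`, for any `M̃ ≥ M₀(t₁)` a
solution of `D⁺|x(t)| ≤ -a(t)|x(t)| + b(t) sup_{t-τ_max ≤ s ≤ t} |x(s)|` satisfies
`|x(t₂)| ≤ max{δ M̃, |x(t₁)| - (η/2) μ(S_η(t₁,t₂)) M̃}`. -/
theorem estimate_on_Seta (Ma Mb τmax η t₁ t₂ : ℝ) (a b : ℝ → ℝ)
    (hτmax : 0 < τmax) (hη : 0 < η)
    (ha : ∀ t ≥ (0 : ℝ), 0 < a t ∧ a t ≤ Ma)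
    (hb : ∀ t ≥ (0 : ℝ), |b t| ≤ Mb)
    (x φ : ℝ → ℝ) (hxcont : Continuous x)
    (hinit : ∀ s ∈ Set.Icc (-τmax) (0 : ℝ), x s = φ s)
    (hineq : ∀ t ≥ (0 : ℝ), DiniUpper (fun s => |x s|) t ≤
      ((-(a t) * |x t| + b t * sSup ((fun s => |x s|) '' Set.Icc (t - τmax) t) : ℝ) : EReal))
    (ht₁ : 0 ≤ t₁) (ht₁₂ : t₁ < t₂)
    (hSeta : ∀ t ∈ Set.Ioo t₁ t₂, a t - |b t| > η) :
    ∀ Mtilde : ℝ, M0 x τmax t₁ ≤ Mtilde →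
      |x t₂| ≤ max ((1 - η / (2 * Ma)) * Mtilde)
        (|x t₁| - η / 2 *
          (MeasureTheory.volume {t ∈ Set.Ioo t₁ t₂ | a t - |b t| > η}).toReal * Mtilde) :=
  estimate_on_Seta_general Ma τmax η t₁ t₂ a b hτmax hη ha x hxcont hineq ht₁ ht₁₂ hSeta
end
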